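/- arXiv:2406.14386 — 2 statements merged into one kernel-verified Lean document; each statement's English description precedes it below -/
import Mathlib

section
/- Let d, M be positive integers with d ≤ M, c_M := Σ_{i=1}^M 1/i the harmonic number. Then Σ_{i=1}^{⌊M/d⌋} (1/i) / c_M ≥ (log M − log d)/log M, where log denotes the natural logarithm and M > 1. -/
open Classical

open Matrix
open scoped ComplexOrder

noncomputable def msqrt {n : Type*} [Fintype n] [DecidableEq n] (A : Matrix n n ℂ) :
    Matrix n n ℂ :=
  if h : A.PosSemidef then
    (h.1.eigenvectorUnitary : Matrix n n ℂ) * diagonal ((↑) ∘ Real.sqrt ∘ h.1.eigenvalues) *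
      (star h.1.eigenvectorUnitary : Matrix n n ℂ)
  else 0

/-- Uhlmann fidelity F_U(ρ,σ) = (Tr √(√σ ρ √σ))². -/
noncomputable def uFid {n : Type*} [Fintype n] [DecidableEq n] (ρ σ : Matrix n n ℂ) : ℝ :=
  ((msqrt (msqrt σ * ρ * msqrt σ)).trace.re) ^ 2

/-- Purified distance. -/
noncomputable def pDist {n : Type*} [Fintype n] [DecidableEq n] (ρ σ : Matrix n n ℂ) : ℝ :=
  Real.sqrt (1 - uFid ρ σ)

def IsDensity {n : Type*} [Fintype n] [DecidableEq n] (ρ : Matrix n n ℂ) : Prop :=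
  ρ.PosSemidef ∧ ρ.trace = 1

noncomputable def Dmax {n : Type*} [Fintype n] [DecidableEq n] (ρ σ : Matrix n n ℂ) : ℝ :=
  sInf {l : ℝ | (((2 : ℝ) ^ l) • σ - ρ).PosSemidef}

/-!
Write `q = ⌊M/d⌋`, so that `2M + 1 ≤ d (2q + 2)`. The midpoint bound
`1/(n+1) ≤ log ((2n+3)/(2n+1))` telescopes to `H_M - H_q ≤ log ((2M+1)/(2q+1)) ≤ log d + 1/(2q+1)`,
while `H_M - log M > γ > 1/2`. In the form `log M · (H_M - H_q) ≤ log d · H_M`, the claim then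
follows whenever `M² ≤ d^(2q+1)`, which holds for all `2 ≤ d ≤ M` except `(d, M) = (2, 3)`;
that case and `d = 1` are checked directly.
-/

open Real

theorem sum_Icc_one_div_eq_harmonic (n : ℕ) :
    ∑ i ∈ Finset.Icc 1 n, (1 : ℝ) / i = harmonic n := by
  simp [harmonic_eq_sum_Icc]

theorem inv_add_one_le_log_sub_log {x : ℝ} (hx : 0 ≤ x) :
    (x + 1)⁻¹ ≤ log (2 * x + 3) - log (2 * x + 1) := by
  have h := le_log_one_add_of_nonneg (x := 2 / (2 * x + 1)) (by positivity)
  rw [← log_div (by positivity) (by positivity)]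
  convert h using 2 <;> field_simp <;> ring

theorem log_add_one_sub_log_le_inv {x : ℝ} (hx : 0 < x) : log (x + 1) - log x ≤ x⁻¹ := by
  rw [← log_div (by positivity) hx.ne']
  calc log ((x + 1) / x) ≤ (x + 1) / x - 1 := log_le_sub_one_of_pos (by positivity)
    _ = x⁻¹ := by field_simp; ring

theorem harmonic_sub_harmonic_le_log {k n : ℕ} (hkn : k ≤ n) :
    (harmonic n - harmonic k : ℝ) ≤ log (2 * n + 1) - log (2 * k + 1) := by
  induction n, hkn using Nat.le_induction with
  | base => simp
  | succ n _ ih =>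
    have := inv_add_one_le_log_sub_log n.cast_nonneg
    push_cast [harmonic_succ]
    rw [show 2 * ((n : ℝ) + 1) + 1 = 2 * n + 3 by ring]
    linarith

theorem log_add_one_half_lt_harmonic {n : ℕ} (hn : n ≠ 0) : log n + 1 / 2 < harmonic n := by
  have := one_half_lt_eulerMascheroniConstant.trans
    (eulerMascheroniConstant_lt_eulerMascheroniSeq' n)
  rw [eulerMascheroniSeq', if_neg hn] at this
  linarith

theorem succ_sq_le_two_pow {q : ℕ} (hq : 3 ≤ q) : (q + 1) ^ 2 ≤ 2 ^ (2 * q - 1) := by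
  induction q, hq using Nat.le_induction with
  | base => norm_num
  | succ q _ ih =>
    calc (q + 1 + 1) ^ 2 ≤ 4 * (q + 1) ^ 2 := by nlinarith
      _ ≤ 4 * 2 ^ (2 * q - 1) := by gcongr
      _ = 2 ^ (2 * (q + 1) - 1) := by
        rw [show 2 * (q + 1) - 1 = 2 * q - 1 + 2 by omega, pow_add]; ring

theorem sq_le_pow_two_mul_div_add_one {d M : ℕ} (hd : 2 ≤ d) (hdM : d ≤ M)
    (h23 : ¬(d = 2 ∧ M = 3)) : M ^ 2 ≤ d ^ (2 * (M / d) + 1) := by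
  obtain ⟨q, hq⟩ : ∃ q, M / d = q := ⟨_, rfl⟩
  have hq1 : 1 ≤ q := hq ▸ Nat.div_pos hdM (by omega)
  have hMq : M < d * (q + 1) := hq ▸ Nat.lt_mul_div_succ M (by omega)
  rw [hq]
  by_cases hsmall : d ≤ 3 ∧ q ≤ 2
  · obtain ⟨hd3, hq2⟩ := hsmall
    have : M ≤ 8 := by nlinarith
    interval_cases d <;> interval_cases M <;> subst hq <;> simp_all
  have hsucc : (q + 1) ^ 2 ≤ d ^ (2 * q - 1) := by
    rcases le_or_gt 3 q with hq3 | hq3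
    · exact (succ_sq_le_two_pow hq3).trans (Nat.pow_le_pow_left hd _)
    · interval_cases q
      · simpa using (show 4 ≤ d by omega)
      · calc (2 + 1) ^ 2 ≤ 4 ^ 3 := by norm_num
          _ ≤ d ^ (2 * 2 - 1) := Nat.pow_le_pow_left (by omega) _
  calc M ^ 2 ≤ (d * (q + 1)) ^ 2 := Nat.pow_le_pow_left hMq.le 2
    _ = d ^ 2 * (q + 1) ^ 2 := by ring
    _ ≤ d ^ 2 * d ^ (2 * q - 1) := by gcongr
    _ = d ^ (2 * q + 1) := by rw [← pow_add]; congr 1; omega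

theorem log_mul_harmonic_sub_le {d M : ℕ} (hd : 2 ≤ d) (hdM : d ≤ M)
    (hpow : M ^ 2 ≤ d ^ (2 * (M / d) + 1)) :
    log M * (harmonic M - harmonic (M / d) : ℝ) ≤ log d * harmonic M := by
  set q := M / d
  have hd0 : (0 : ℝ) < d := by positivity
  have hM0 : (0 : ℝ) < M := by norm_cast; omega
  have hq0 : (0 : ℝ) < 2 * q + 1 := by positivity
  have hMq : (2 * M + 1 : ℝ) ≤ d * (2 * q + 1 + 1) := by
    have : M < d * (q + 1) := Nat.lt_mul_div_succ M (by omega)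
    norm_cast
    nlinarith
  have htail : (harmonic M - harmonic q : ℝ) ≤ log d + (2 * q + 1 : ℝ)⁻¹ :=
    calc (harmonic M - harmonic q : ℝ) ≤ log (2 * M + 1) - log (2 * q + 1) :=
          harmonic_sub_harmonic_le_log (Nat.div_le_self M d)
      _ ≤ log d + log (2 * q + 1 + 1) - log (2 * q + 1) := by
          rw [← log_mul hd0.ne' (by positivity)]
          gcongr
      _ ≤ log d + (2 * q + 1 : ℝ)⁻¹ := by
          linarith [log_add_one_sub_log_le_inv hq0]
  have hhead : log M + 1 / 2 < harmonic M := log_add_one_half_lt_harmonic (by omega)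
  have hexp : 2 * log M ≤ (2 * q + 1) * log d := by
    have := log_le_log (by positivity) (show (M : ℝ) ^ 2 ≤ (d : ℝ) ^ (2 * q + 1) by
      exact_mod_cast hpow)
    simpa [log_pow] using this
  have hlogM : 0 ≤ log M := log_nonneg (by norm_cast; omega)
  have hlogd : 0 ≤ log d := log_nonneg (by norm_cast; omega)
  calc log M * (harmonic M - harmonic q : ℝ)
      ≤ log M * (log d + (2 * q + 1 : ℝ)⁻¹) := by gcongr
    _ = log d * log M + log M / (2 * q + 1) := by ring
    _ ≤ log d * log M + log d / 2 := by
        have : log M / (2 * q + 1) ≤ log d / 2 := by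
          rw [div_le_div_iff₀ hq0 two_pos]
          linarith
        linarith
    _ = log d * (log M + 1 / 2) := by ring
    _ ≤ log d * harmonic M := by gcongr

theorem harmonic_ratio_bound (d M : ℕ) (hd : 1 ≤ d) (hdM : d ≤ M) (hM : 1 < M) :
    (∑ i ∈ Finset.Icc 1 (M / d), (1 : ℝ) / i) / (∑ i ∈ Finset.Icc 1 M, (1 : ℝ) / i)
      ≥ (Real.log M - Real.log d) / Real.log M := by
  rw [sum_Icc_one_div_eq_harmonic, sum_Icc_one_div_eq_harmonic, ge_iff_le,
    div_le_div_iff₀ (log_pos (by exact_mod_cast hM)) (by exact_mod_cast harmonic_pos (by omega))]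
  suffices log M * (harmonic M - harmonic (M / d) : ℝ) ≤ log d * harmonic M by linarith
  rcases hd.eq_or_lt with rfl | hd2
  · simp
  by_cases h23 : d = 2 ∧ M = 3
  · obtain ⟨rfl, rfl⟩ := h23
    have hlog3 : log 3 ≤ 2 * log 2 := by
      rw [← log_rpow two_pos]
      exact log_le_log (by norm_num) (by norm_num)
    have hH : (harmonic 3 : ℝ) = 11 / 6 ∧ (harmonic (3 / 2) : ℝ) = 1 := by norm_num [harmonic]
    rw [hH.1, hH.2]
    push_cast
    linarith [log_pos (by norm_num : (1 : ℝ) < 2)]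
  exact log_mul_harmonic_sub_le hd2 hdM (sq_le_pow_two_mul_div_add_one hd2 hdM h23)
end

section
/- Let d ≤ M be positive integers with M > 1, c_M := Σ_{j=1}^M 1/j, and define coefficients ω_{ij} := 1/√(⌈((i−1)M+j)/d⌉ · d · c_M) for 1 ≤ i ≤ d, 1 ≤ j ≤ M. Then the inner product Σ_{j=1}^M ω_{1j}/√(j c_M) between the vector |11⟩⊗|τ^E⟩ and |ω⟩ = Σ_{i,j} ω_{ij}|ii⟩|jj⟩ is at least (log M − log d)/log M. -/
open Classical

open Matrix
open scoped ComplexOrder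

/-!
Write `a_j = ⌈j/d⌉ d ≥ j`. Each term `1/√(a_j c)/√(j c)` is at least `1/(a_j c)`, so the sum
is at least `S/c` with `S = ∑_{j ≤ M} 1/a_j`. On the block `(n-1)d < j ≤ nd` one has `a_j = nd`,
so `∑_{j ≤ Kd} 1/a_j = H_K`; taking `K = M` and using that `1/j - 1/a_j ≥ 0` gives
`c - S ≤ H_{Md} - H_M ≤ log d`. Finally `S/c ≥ 1 - log d / c ≥ 1 - log d / log M`, since
`c = H_M ≥ log M`.
-/

open Finset

lemma harmonic_sub_harmonic_le_log_sub_log {k n : ℕ} (hk : 0 < k) (hkn : k ≤ n) :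
    (harmonic n : ℝ) - harmonic k ≤ Real.log n - Real.log k := by
  induction n, hkn using Nat.le_induction with
  | base => simp
  | succ n hkn ih =>
    have hn : (0 : ℝ) < n := by exact_mod_cast hk.trans_le hkn
    have step : ((n : ℝ) + 1)⁻¹ ≤ Real.log (n + 1) - Real.log n := by
      have h := Real.one_sub_inv_le_log_of_pos (x := (n + 1) / n) (by positivity)
      rw [Real.log_div (by positivity) hn.ne', inv_div] at h
      convert h using 1
      field_simp
      ring
    push_cast [harmonic_succ]
    linarith

lemma harmonic_eq_sum_Icc_one_div (n : ℕ) :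
    (harmonic n : ℝ) = ∑ i ∈ Icc 1 n, 1 / (i : ℝ) := by
  simp [harmonic_eq_sum_Icc]

lemma natCeil_div_eq_of_mem_Ioc {d n j : ℕ} (hd : 0 < d)
    (hj : j ∈ Ioc (n * d) ((n + 1) * d)) :
    ⌈(j : ℝ) / d⌉₊ = n + 1 := by
  have hd' : (0 : ℝ) < d := by exact_mod_cast hd
  rw [mem_Ioc] at hj
  rw [Nat.ceil_eq_iff (Nat.add_one_ne_zero n), Nat.add_sub_cancel, lt_div_iff₀ hd',
    div_le_iff₀ hd']
  exact ⟨by exact_mod_cast hj.1, by exact_mod_cast hj.2⟩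

lemma le_natCeil_div_mul {d : ℕ} (hd : 0 < d) (j : ℕ) : (j : ℝ) ≤ ⌈(j : ℝ) / d⌉₊ * d :=
  (div_le_iff₀ (by exact_mod_cast hd)).1 (Nat.le_ceil _)

lemma sum_Icc_one_div_natCeil_div_mul {d : ℕ} (hd : 0 < d) (K : ℕ) :
    ∑ j ∈ Icc 1 (K * d), 1 / ((⌈(j : ℝ) / d⌉₊ : ℝ) * d) = harmonic K := by
  induction K with
  | zero => simp
  | succ K ih =>
    have hblock : ∑ j ∈ Ioc (K * d) ((K + 1) * d), 1 / ((⌈(j : ℝ) / d⌉₊ : ℝ) * d)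
        = ((K : ℝ) + 1)⁻¹ := by
      rw [sum_congr rfl fun j hj => by rw [natCeil_div_eq_of_mem_Ioc hd hj], sum_const,
        Nat.card_Ioc, add_mul, one_mul, Nat.add_sub_cancel_left, nsmul_eq_mul]
      have : (d : ℝ) ≠ 0 := by exact_mod_cast hd.ne'
      push_cast
      field_simp
    have hIcc (n : ℕ) : Icc 1 n = Ioc 0 n := Icc_succ_left_eq_Ioc 0 n
    rw [hIcc] at ih ⊢
    rw [← sum_Ioc_consecutive _ (Nat.zero_le (K * d)) (by nlinarith), ih, hblock]
    push_cast [harmonic_succ]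
    rfl

lemma one_div_le_one_div_sqrt_div_sqrt {x y : ℝ} (hx : 0 < x) (hxy : x ≤ y) :
    1 / y ≤ 1 / √y / √x := by
  have hy : 0 < y := hx.trans_le hxy
  rw [div_div, ← Real.sqrt_mul hy.le]
  gcongr
  calc √(y * x) ≤ √(y * y) := by gcongr
    _ = y := Real.sqrt_mul_self hy.le

lemma sum_Icc_one_div_sub_one_div_natCeil_div_mul_le_log {d : ℕ} (hd : 0 < d) (M : ℕ) :
    ∑ j ∈ Icc 1 M, (1 / (j : ℝ) - 1 / ((⌈(j : ℝ) / d⌉₊ : ℝ) * d)) ≤ Real.log d := by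
  rcases M.eq_zero_or_pos with rfl | hM
  · simpa using Real.log_natCast_nonneg d
  calc ∑ j ∈ Icc 1 M, (1 / (j : ℝ) - 1 / ((⌈(j : ℝ) / d⌉₊ : ℝ) * d))
      ≤ ∑ j ∈ Icc 1 (M * d), (1 / (j : ℝ) - 1 / ((⌈(j : ℝ) / d⌉₊ : ℝ) * d)) := by
        refine sum_le_sum_of_subset_of_nonneg
          (Icc_subset_Icc_right (Nat.le_mul_of_pos_right M hd)) fun j hj _ => sub_nonneg.2 ?_
        exact one_div_le_one_div_of_le (by exact_mod_cast (mem_Icc.1 hj).1)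
          (le_natCeil_div_mul hd j)
    _ = (harmonic (M * d) : ℝ) - harmonic M := by
        rw [sum_sub_distrib, sum_Icc_one_div_natCeil_div_mul hd, harmonic_eq_sum_Icc_one_div,
          harmonic_eq_sum_Icc_one_div]
    _ ≤ Real.log (M * d : ℕ) - Real.log M :=
        harmonic_sub_harmonic_le_log_sub_log hM (Nat.le_mul_of_pos_right M hd)
    _ = Real.log d := by
        push_cast
        rw [Real.log_mul (by positivity) (by positivity)]
        ring

theorem embezzling_overlap_bound_general (d M : ℕ) (hd : 1 ≤ d) (hM : 1 < M)
    (c : ℝ) (hc : c = ∑ i ∈ Finset.Icc 1 M, (1 : ℝ) / i) :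
    ∑ j ∈ Finset.Icc 1 M,
        (1 / Real.sqrt ((⌈(j : ℝ) / d⌉₊ : ℝ) * d * c)) / Real.sqrt (j * c)
      ≥ (Real.log M - Real.log d) / Real.log M := by
  have hlogM : 0 < Real.log M := Real.log_pos (by exact_mod_cast hM)
  have hlogM_le : Real.log M ≤ c := by
    rw [hc, ← harmonic_eq_sum_Icc_one_div]
    exact (Real.log_le_log (by positivity) (by push_cast; linarith)).trans
      (log_add_one_le_harmonic M)
  have hc0 : 0 < c := hlogM.trans_le hlogM_le
  have hS := sum_Icc_one_div_sub_one_div_natCeil_div_mul_le_log hd M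
  rw [sum_sub_distrib, ← hc] at hS
  calc (Real.log M - Real.log d) / Real.log M
      = 1 - Real.log d / Real.log M := by rw [sub_div, div_self hlogM.ne']
    _ ≤ 1 - Real.log d / c := by gcongr
    _ ≤ ∑ j ∈ Icc 1 M, 1 / ((⌈(j : ℝ) / d⌉₊ : ℝ) * d) / c := by
        rw [← sum_div, le_div_iff₀ hc0]
        linarith [mul_div_cancel₀ (Real.log d) hc0.ne']
    _ ≤ ∑ j ∈ Icc 1 M, (1 / √((⌈(j : ℝ) / d⌉₊ : ℝ) * d * c)) / √(j * c) := by
        refine sum_le_sum fun j hj => ?_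
        rw [div_div]
        exact one_div_le_one_div_sqrt_div_sqrt
          (by have := (mem_Icc.1 hj).1; positivity)
          (mul_le_mul_of_nonneg_right (le_natCeil_div_mul hd j) hc0.le)

theorem embezzling_overlap_bound (d M : ℕ) (hd : 1 ≤ d) (hdM : d ≤ M) (hM : 1 < M)
    (c : ℝ) (hc : c = ∑ i ∈ Finset.Icc 1 M, (1 : ℝ) / i) :
    ∑ j ∈ Finset.Icc 1 M,
        (1 / Real.sqrt ((⌈(j : ℝ) / d⌉₊ : ℝ) * d * c)) / Real.sqrt (j * c)
      ≥ (Real.log M - Real.log d) / Real.log M :=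
  embezzling_overlap_bound_general d M hd hM c hc
end
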